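/- (Lemma 'tian', invertible case.) Let Π₁, …, Π_m be projectors on ℂ^D such that Q = Σ_{i=1}^{m} Πᵢ is invertible (equivalently, positive definite). Let S ⊆ {1,…,m} be a subset of size k ≥ 1 whose members pairwise commute, and let P = ∏_{i∈S} Πᵢ. Then P Q⁻¹ P ≤ (1/k) P in the Loewner order. -/

import Mathlib

/-!
Since `P Πᵢ = P` for `i ∈ S`, each `Πᵢ - P` is a projector, so `k P ≤ ∑_{i ∈ S} Πᵢ ≤ Q`.
For a projector `p` and an invertible `q` with `r p ≤ q`, put `x = p q⁻¹ p`. Conjugating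
`r p ≤ q` by `q⁻¹ p` gives `r x² ≤ x`, hence `0 ≤ (p - r x)² = p - 2 r x + r² x² ≤ p - r x`,
that is `x ≤ r⁻¹ p`.
-/

open scoped Ring ComplexOrder MatrixOrder

namespace IsStarProjection

section Ordered

variable {A : Type*} [Ring A] [StarRing A] [PartialOrder A] [StarOrderedRing A]
  [Algebra ℝ A] [StarModule ℝ A]

theorem mul_ringInverse_mul_le_inv_smul {p q : A} (hp : IsStarProjection p) (hq : IsUnit q)
    {r : ℝ} (hr : 0 < r) (hpq : r • p ≤ q) : p * q⁻¹ʳ * p ≤ r⁻¹ • p := by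
  set x := p * q⁻¹ʳ * p
  have hp2 : p * p = p := hp.isIdempotentElem.eq
  have hpx : p * x = x := by simp only [x, ← mul_assoc, hp2]
  have hxp : x * p = x := by simp only [x, mul_assoc, hp2]
  have hq_sa : IsSelfAdjoint q := by
    simpa using ((IsSelfAdjoint.all r).smul hp.isSelfAdjoint).add
      (IsSelfAdjoint.of_nonneg (sub_nonneg.mpr hpq))
  have hstar : star (q⁻¹ʳ * p) = p * q⁻¹ʳ := by
    rw [star_mul, hp.isSelfAdjoint.star_eq, hq_sa.ringInverse.star_eq]
  have hxx : r • (x * x) ≤ x := by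
    have := star_left_conjugate_le_conjugate hpq (q⁻¹ʳ * p)
    have e1 : p * q⁻¹ʳ * (r • p) * (q⁻¹ʳ * p) = r • (x * x) := by
      simp only [x, mul_smul_comm, smul_mul_assoc, mul_assoc]
      rw [← mul_assoc p p, hp2]
    have e2 : p * q⁻¹ʳ * q * (q⁻¹ʳ * p) = x := by
      rw [mul_assoc p, Ring.inverse_mul_cancel q hq, mul_one, ← mul_assoc]
    rwa [hstar, e1, e2] at this
  have hx_sa : star x = x := by
    simp only [x, star_mul, hp.isSelfAdjoint.star_eq, hq_sa.ringInverse.star_eq, mul_assoc]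
  have hsq : 0 ≤ p - (2 * r) • x + r • (r • (x * x)) := by
    have hexp : star (p - r • x) * (p - r • x) = p - (2 * r) • x + r • (r • (x * x)) := by
      rw [star_sub, star_smul, hp.isSelfAdjoint.star_eq, hx_sa, star_trivial]
      simp only [sub_mul, mul_sub, smul_mul_assoc, mul_smul_comm, hp2, hpx, hxp, smul_smul]
      module
    exact hexp ▸ star_mul_self_nonneg _
  have hrx : r • x ≤ p := by
    rw [← sub_nonneg]
    calc 0 ≤ (p - (2 * r) • x + r • (r • (x * x))) + (r • x - r • (r • (x * x))) :=
          add_nonneg hsq (sub_nonneg.mpr (smul_le_smul_of_nonneg_left hxx hr.le))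
      _ = p - r • x := by module
  calc x = r⁻¹ • (r • x) := by rw [smul_smul, inv_mul_cancel₀ hr.ne', one_smul]
    _ ≤ r⁻¹ • p := smul_le_smul_of_nonneg_left hrx (inv_nonneg.mpr hr.le)

end Ordered

variable {ι R : Type*} {f : ι → R} {s : Finset ι}

theorem noncommProd [Semiring R] [StarRing R]
    (comm : (s : Set ι).Pairwise (Function.onFun Commute f))
    (hf : ∀ i ∈ s, IsStarProjection (f i)) : IsStarProjection (s.noncommProd f comm) := by
  classical
  induction s using Finset.induction_on with
  | empty => simp [IsStarProjection.one]
  | insert a s ha ih =>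
    rw [Finset.noncommProd_insert_of_notMem _ _ _ _ ha]
    refine (hf a (s.mem_insert_self a)).mul
      (ih (comm.mono (by simp)) fun i hi => hf i (Finset.mem_insert_of_mem hi)) ?_
    exact Finset.noncommProd_commute _ _ _ _ fun i hi =>
      comm (s.mem_insert_self a) (Finset.mem_insert_of_mem hi) (ne_of_mem_of_not_mem hi ha).symm

variable [Ring R] [StarRing R] [PartialOrder R] [StarOrderedRing R]
  (comm : (s : Set ι).Pairwise (Function.onFun Commute f))

theorem noncommProd_le (hf : ∀ i ∈ s, IsStarProjection (f i)) {i : ι} (hi : i ∈ s) :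
    s.noncommProd f comm ≤ f i := by
  classical
  refine (noncommProd comm hf).le_of_mul_eq_right (hf i hi) ?_
  rw [← Finset.mul_noncommProd_erase s hi, ← mul_assoc, (hf i hi).isIdempotentElem.eq]

theorem card_nsmul_noncommProd_le_sum (hf : ∀ i ∈ s, IsStarProjection (f i)) :
    s.card • s.noncommProd f comm ≤ ∑ i ∈ s, f i := by
  rw [← Finset.sum_const]
  exact Finset.sum_le_sum fun i hi => noncommProd_le comm hf hi

end IsStarProjection

/-- **Lemma 'tian', invertible case.** If `Q = Σᵢ Πᵢ` is invertible and
`P = ∏_{i∈S} Πᵢ` is a product of `k` pairwise-commuting projectors, then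
`P Q⁻¹ P ≤ (1/k) P`. -/
theorem tian_invertible
    (D m : ℕ)
    (P : Fin m → Matrix (Fin D) (Fin D) ℂ)
    (hherm : ∀ i, (P i).IsHermitian)
    (hidem : ∀ i, P i * P i = P i)
    (hQ : IsUnit (∑ i, P i).det)
    (S : Finset (Fin m)) (k : ℕ) (hk : S.card = k) (hk1 : 1 ≤ k)
    (hcomm : ∀ i ∈ S, ∀ j ∈ S, Commute (P i) (P j)) :
    let Pm := S.noncommProd P (fun a ha b hb _ => hcomm a ha b hb)
    (((1 / (k : ℝ) : ℝ) : ℂ) • Pm - Pm * (∑ i, P i)⁻¹ * Pm).PosSemidef := by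
  intro Pm
  have hproj : ∀ i, IsStarProjection (P i) := fun i => ⟨hidem i, hherm i⟩
  have hk0 : (0 : ℝ) < k := by exact_mod_cast hk1
  have hle : (k : ℝ) • Pm ≤ ∑ i, P i :=
    calc (k : ℝ) • Pm = S.card • Pm := by rw [hk, Nat.cast_smul_eq_nsmul]
      _ ≤ ∑ i ∈ S, P i := IsStarProjection.card_nsmul_noncommProd_le_sum _ fun i _ => hproj i
      _ ≤ ∑ i, P i := Finset.sum_le_sum_of_subset_of_nonneg (Finset.subset_univ S)
          fun i _ _ => (hproj i).nonneg
  have key := (IsStarProjection.noncommProd _ fun i _ => hproj i).mul_ringInverse_mul_le_inv_smul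
    ((Matrix.isUnit_iff_isUnit_det _).mpr hQ) hk0 hle
  rw [← Matrix.nonsing_inv_eq_ringInverse] at key
  rwa [one_div, Complex.coe_smul]
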